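/- For every pairwise reciprocal matrix A of size n ≥ 1, the constrained WLS minimizer is unique: if w : Fin n → ℝ satisfies ∑ᵢ w i = 1 and f(w) ≤ f(u) for all u with ∑ᵢ u i = 1, then w = w* := (1/c) • (G⁻¹.mulVec 1), where c = ∑ᵢ ∑ⱼ (G⁻¹) i j. -/

import Mathlib

open Matrix BigOperators

/-- A pairwise reciprocal matrix (PRM): all entries positive and `A i j * A j i = 1`. -/
def IsPRM {n : ℕ} (A : Matrix (Fin n) (Fin n) ℝ) : Prop :=
  ∀ i j, 0 < A i j ∧ A i j * A j i = 1

/-- The matrix `Ḡ` with diagonal `(n-1) + ∑_{k ≠ i} (A k i)^2` and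
off-diagonal `-(A i j + A j i)`. -/
noncomputable def Gbar {n : ℕ} (A : Matrix (Fin n) (Fin n) ℝ) :
    Matrix (Fin n) (Fin n) ℝ :=
  Matrix.of fun i j =>
    if i = j then ((n : ℝ) - 1) + ∑ k ∈ Finset.univ.filter (fun k => k ≠ i), (A k i) ^ 2
    else -(A i j + A j i)

/-- The all-ones matrix `J`. -/
noncomputable def Jmat (n : ℕ) : Matrix (Fin n) (Fin n) ℝ :=
  Matrix.of fun _ _ => 1

/-- `G = Ḡ + J`. -/
noncomputable def Gmat {n : ℕ} (A : Matrix (Fin n) (Fin n) ℝ) :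
    Matrix (Fin n) (Fin n) ℝ :=
  Gbar A + Jmat n

/-- The weighted least squares objective `f(w) = ∑ i ∑ j (w i - A i j * w j)^2`. -/
noncomputable def wls {n : ℕ} (A : Matrix (Fin n) (Fin n) ℝ) (w : Fin n → ℝ) : ℝ :=
  ∑ i, ∑ j, (w i - A i j * w j) ^ 2

/-! For `∑ u = 1` the objective is a shifted quadratic form, `f u = uᵀ G u - 1`, because
`f u = uᵀ Ḡ u` and `uᵀ J u = (∑ u)²`. The form is positive definite: `f u = 0` forces
`u i = A i j * u j` for all `i, j`, and summing over `i` against a positive column of `A` gives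
`u = 0` once `∑ u = 0`. A positive definite form has exactly one minimizer `w₀ = G⁻¹a / (aᵀG⁻¹a)`
on a hyperplane `aᵀu = 1`: there `G w₀` is a multiple of `a`, so
`uᵀGu = w₀ᵀGw₀ + (u - w₀)ᵀG(u - w₀)`. -/

namespace Matrix

variable {ι : Type*} [Fintype ι]

theorem dotProduct_mulVec_add_of_isSymm {G : Matrix ι ι ℝ} (hG : G.IsSymm) {v y : ι → ℝ}
    (h : y ⬝ᵥ G *ᵥ v = 0) :
    (v + y) ⬝ᵥ G *ᵥ (v + y) = v ⬝ᵥ G *ᵥ v + y ⬝ᵥ G *ᵥ y := by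
  have h' : v ⬝ᵥ G *ᵥ y = 0 := by rw [← dotProduct_transpose_mulVec, hG.eq, h]
  simp only [mulVec_add, dotProduct_add, add_dotProduct, h, h']
  ring

theorem PosDef.eq_smul_inv_mulVec_of_isMinOn [DecidableEq ι] {G : Matrix ι ι ℝ} (hG : G.PosDef)
    {a w : ι → ℝ} (hmin : IsMinOn (fun u => u ⬝ᵥ G *ᵥ u) {u | a ⬝ᵥ u = 1} w)
    (hw : a ⬝ᵥ w = 1) :
    w = (a ⬝ᵥ G⁻¹ *ᵥ a)⁻¹ • G⁻¹ *ᵥ a := by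
  set c := a ⬝ᵥ G⁻¹ *ᵥ a
  set w₀ := c⁻¹ • G⁻¹ *ᵥ a
  have ha : a ≠ 0 := by
    rintro rfl
    simp at hw
  have hc : 0 < c := by simpa using hG.inv.dotProduct_mulVec_pos ha
  have hGw₀ : G *ᵥ w₀ = c⁻¹ • a := by
    rw [mulVec_smul, mulVec_mulVec, mul_nonsing_inv G ((isUnit_iff_isUnit_det G).mp hG.isUnit),
      one_mulVec]
  have hw₀ : a ⬝ᵥ w₀ = 1 := by
    rw [dotProduct_smul, smul_eq_mul, inv_mul_cancel₀ hc.ne']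
  have hsplit : ∀ u, a ⬝ᵥ u = 1 →
      u ⬝ᵥ G *ᵥ u = w₀ ⬝ᵥ G *ᵥ w₀ + (u - w₀) ⬝ᵥ G *ᵥ (u - w₀) := by
    intro u hu
    conv_lhs => rw [← add_sub_cancel w₀ u]
    apply dotProduct_mulVec_add_of_isSymm (isHermitian_iff_isSymm.mp hG.isHermitian)
    rw [hGw₀, dotProduct_smul, dotProduct_comm, dotProduct_sub, hu, hw₀, sub_self, smul_zero]
  have hle : (w - w₀) ⬝ᵥ G *ᵥ (w - w₀) ≤ 0 := by
    have hw_le : w ⬝ᵥ G *ᵥ w ≤ w₀ ⬝ᵥ G *ᵥ w₀ := hmin (show w₀ ∈ {u | a ⬝ᵥ u = 1} from hw₀)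
    linarith [hsplit w hw]
  by_contra hne
  have hpos := hG.dotProduct_mulVec_pos (sub_ne_zero.mpr hne)
  rw [star_trivial] at hpos
  linarith

end Matrix

section PRM

variable {n : ℕ} {A : Matrix (Fin n) (Fin n) ℝ}

theorem IsPRM.diag_eq_one (hA : IsPRM A) (i : Fin n) : A i i = 1 := by
  nlinarith [hA i i]

theorem Gbar_eq_diagonal_sub (hA : ∀ i, A i i = 1) :
    Gbar A = diagonal (fun i => n + ∑ k, A k i ^ 2) - (A + Aᵀ) := by
  ext i j
  by_cases hij : i = j
  · subst hij
    rw [Gbar, of_apply, if_pos rfl, Finset.filter_ne', Finset.sum_erase_eq_sub (Finset.mem_univ i)]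
    simp only [Matrix.sub_apply, diagonal_apply_eq, Matrix.add_apply, transpose_apply, hA]
    ring
  · simp [Gbar, hij]

theorem Gbar_isSymm (A : Matrix (Fin n) (Fin n) ℝ) : (Gbar A).IsSymm :=
  IsSymm.ext fun i j => by
    by_cases hij : i = j
    · rw [hij]
    · simp [Gbar, hij, Ne.symm hij, add_comm]

theorem Gmat_isSymm (A : Matrix (Fin n) (Fin n) ℝ) : (Gmat A).IsSymm :=
  (Gbar_isSymm A).add (IsSymm.ext fun _ _ => rfl)

theorem wls_eq_dotProduct_Gbar_mulVec (hA : ∀ i, A i i = 1) (u : Fin n → ℝ) :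
    wls A u = u ⬝ᵥ Gbar A *ᵥ u := by
  have hswap : ∑ i, ∑ j, (A i j * u j) ^ 2 = ∑ i, (∑ k, A k i ^ 2) * u i ^ 2 := by
    rw [Finset.sum_comm]
    simp only [mul_pow, Finset.sum_mul]
  have hcross : ∑ i, ∑ j, 2 * u i * (A i j * u j) = 2 * (u ⬝ᵥ A *ᵥ u) := by
    simp only [dotProduct, mulVec, Finset.mul_sum, mul_assoc]
  have hdiag : u ⬝ᵥ (diagonal fun i => (n : ℝ) + ∑ k, A k i ^ 2) *ᵥ u
      = ∑ i, n * u i ^ 2 + ∑ i, (∑ k, A k i ^ 2) * u i ^ 2 := by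
    simp only [dotProduct, mulVec_diagonal, ← Finset.sum_add_distrib]
    exact Finset.sum_congr rfl fun i _ => by ring
  rw [Gbar_eq_diagonal_sub hA, sub_mulVec, add_mulVec, dotProduct_sub, dotProduct_add,
    dotProduct_transpose_mulVec, hdiag]
  simp only [wls, sub_sq, Finset.sum_add_distrib, Finset.sum_sub_distrib, hswap, hcross,
    Finset.sum_const, Finset.card_univ, Fintype.card_fin, nsmul_eq_mul]
  ring

theorem dotProduct_Jmat_mulVec (u : Fin n → ℝ) : u ⬝ᵥ Jmat n *ᵥ u = (∑ i, u i) ^ 2 := by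
  simp only [dotProduct, mulVec, Jmat, of_apply, one_mul, ← Finset.sum_mul, sq]

theorem dotProduct_Gmat_mulVec (hA : ∀ i, A i i = 1) (u : Fin n → ℝ) :
    u ⬝ᵥ Gmat A *ᵥ u = wls A u + (∑ i, u i) ^ 2 := by
  rw [Gmat, add_mulVec, dotProduct_add, wls_eq_dotProduct_Gbar_mulVec hA, dotProduct_Jmat_mulVec]

theorem wls_nonneg (A : Matrix (Fin n) (Fin n) ℝ) (u : Fin n → ℝ) : 0 ≤ wls A u :=
  Finset.sum_nonneg fun _ _ => Finset.sum_nonneg fun _ _ => sq_nonneg _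

theorem wls_eq_zero_iff {u : Fin n → ℝ} : wls A u = 0 ↔ ∀ i j, u i = A i j * u j := by
  simp only [wls, Fintype.sum_eq_zero_iff_of_nonneg (fun _ => Finset.sum_nonneg fun _ _ =>
    sq_nonneg _), Fintype.sum_eq_zero_iff_of_nonneg (fun _ => sq_nonneg _), funext_iff,
    Pi.zero_apply, sq_eq_zero_iff, sub_eq_zero]

theorem eq_zero_of_wls_eq_zero (hA : ∀ i j, 0 < A i j) {u : Fin n → ℝ} (h0 : wls A u = 0)
    (hs : ∑ i, u i = 0) : u = 0 := by
  funext j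
  have hcol : (∑ i, A i j) * u j = 0 := by
    rw [Finset.sum_mul, ← hs]
    exact Finset.sum_congr rfl fun i _ => (wls_eq_zero_iff.mp h0 i j).symm
  exact (mul_eq_zero.mp hcol).resolve_left
    (Finset.sum_pos (fun i _ => hA i j) ⟨j, Finset.mem_univ j⟩).ne'

theorem Gmat_posDef (hA : IsPRM A) : (Gmat A).PosDef := by
  refine PosDef.of_dotProduct_mulVec_pos (isHermitian_iff_isSymm.mpr (Gmat_isSymm A))
    fun u hu => ?_
  rw [star_trivial, dotProduct_Gmat_mulVec hA.diag_eq_one]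
  rcases eq_or_ne (∑ i, u i) 0 with hs | hs
  · rw [hs, zero_pow two_ne_zero, add_zero]
    exact (wls_nonneg A u).lt_of_ne fun h =>
      hu (eq_zero_of_wls_eq_zero (fun i j => (hA i j).1) h.symm hs)
  · exact add_pos_of_nonneg_of_pos (wls_nonneg A u) (by positivity)

end PRM

theorem pigm_unique_minimizer_general {n : ℕ}
    (A : Matrix (Fin n) (Fin n) ℝ) (hA : IsPRM A) (w : Fin n → ℝ)
    (hsum : ∑ i, w i = 1)
    (hmin : ∀ u : Fin n → ℝ, (∑ i, u i = 1) → wls A w ≤ wls A u) :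
    w = (1 / ∑ i, ∑ j, (Gmat A)⁻¹ i j) • ((Gmat A)⁻¹.mulVec 1) := by
  have hquad : ∀ u : Fin n → ℝ, ∑ i, u i = 1 → u ⬝ᵥ Gmat A *ᵥ u = wls A u + 1 := fun u hu => by
    rw [dotProduct_Gmat_mulVec hA.diag_eq_one, hu, one_pow]
  have hmin' : IsMinOn (fun u => u ⬝ᵥ Gmat A *ᵥ u) {u | 1 ⬝ᵥ u = 1} w := fun u hu => by
    simp only [Set.mem_ofPred_eq, one_dotProduct] at hu ⊢
    rw [hquad w hsum, hquad u hu]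
    linarith [hmin u hu]
  have htotal : ∑ i, ∑ j, (Gmat A)⁻¹ i j = 1 ⬝ᵥ (Gmat A)⁻¹ *ᵥ 1 := by
    simp [dotProduct, mulVec]
  rw [one_div, htotal]
  exact (Gmat_posDef hA).eq_smul_inv_mulVec_of_isMinOn hmin' (by rwa [one_dotProduct])

/-- the constrained WLS minimizer is unique: any `w` with `∑ i, w i = 1`
minimizing `f` over the constraint set equals `w* = (1/c) • (G⁻¹.mulVec 1)`. -/
theorem pigm_unique_minimizer {n : ℕ} (hn : 1 ≤ n)
    (A : Matrix (Fin n) (Fin n) ℝ) (hA : IsPRM A) (w : Fin n → ℝ)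
    (hsum : ∑ i, w i = 1)
    (hmin : ∀ u : Fin n → ℝ, (∑ i, u i = 1) → wls A w ≤ wls A u) :
    w = (1 / ∑ i, ∑ j, (Gmat A)⁻¹ i j) • ((Gmat A)⁻¹.mulVec 1) :=
  pigm_unique_minimizer_general A hA w hsum hmin
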